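/- arXiv:2006.06159 — 2 statements merged into one kernel-verified Lean document; each statement's English description precedes it below -/
import Mathlib

section
/- Let I : [0,∞) → [0, L) be a continuous strictly increasing bijection onto [0, L) with I(0) = 0, and let γ_E ≥ 0 be a random variable with CDF F_E. Then for any target rate R_s ∈ (0, L), the secrecy outage probability P(max{I(γ_B) − I(γ_E), 0} < R_s) is bounded below by 1 − F_E(I⁻¹(L − R_s)) for every random variable γ_B ≥ 0; in particular, it cannot converge to 0 as the distribution of γ_B improves, unless F_E(I⁻¹(L − R_s)) = 1. -/
open Real MeasureTheory

theorem sop_floor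
    {Ω : Type*} [MeasurableSpace Ω] (μ : Measure Ω) [IsProbabilityMeasure μ]
    (γB γE : Ω → ℝ) (hmB : Measurable γB) (hmE : Measurable γE)
    (hB0 : ∀ ω, 0 ≤ γB ω) (hE0 : ∀ ω, 0 ≤ γE ω)
    (I : ℝ → ℝ) (L : ℝ) (hL : 0 < L)
    (hIcont : ContinuousOn I (Set.Ici 0))
    (hImono : StrictMonoOn I (Set.Ici 0))
    (hI0 : I 0 = 0)
    (hIlt : ∀ γ : ℝ, 0 ≤ γ → I γ < L)
    (hIsup : Filter.Tendsto I Filter.atTop (nhds L))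
    (Rs : ℝ) (hRs0 : 0 < Rs) (hRsL : Rs < L)
    (H : ℝ) (hH0 : 0 ≤ H) (hIH : I H = L - Rs) :
    1 - (μ (γE ⁻¹' Set.Iic H)).toReal
      ≤ (μ {ω | max (I (γB ω) - I (γE ω)) 0 < Rs}).toReal := by
  set A : Set Ω := γE ⁻¹' Set.Iic H with hA
  have hAmeas : MeasurableSet A := hmE measurableSet_Iic
  have hsub : Aᶜ ⊆ {ω | max (I (γB ω) - I (γE ω)) 0 < Rs} := by
    intro ω hω
    have hlt : H < γE ω := by simpa [hA, Set.mem_preimage, not_le] using hω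
    have hIE : L - Rs < I (γE ω) := by
      rw [← hIH]
      exact hImono (Set.mem_Ici.2 hH0) (Set.mem_Ici.2 (hE0 ω)) hlt
    have hIB : I (γB ω) < L := hIlt _ (hB0 ω)
    have : I (γB ω) - I (γE ω) < Rs := by linarith
    simp only [Set.mem_setOf_eq, max_lt_iff]
    exact ⟨this, hRs0⟩
  have hμ : μ Aᶜ ≤ μ {ω | max (I (γB ω) - I (γE ω)) 0 < Rs} := measure_mono hsub
  have hcompl : (μ Aᶜ).toReal = 1 - (μ A).toReal := by
    rw [prob_compl_eq_one_sub hAmeas, ENNReal.toReal_sub_of_le prob_le_one (by simp)]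
    simp
  rw [← hcompl]
  exact ENNReal.toReal_mono (measure_ne_top μ _) hμ
end

section
/- For u_B, u_E > 0, ϑ ≥ 0, and nonnegative integers j, k: ∫₀^∞ e^{−ϑx} · (x^j e^{−x/u_B}/(j!·u_B^{j+1})) · (1 − e^{−x/u_E} Σ_{q=0}^{k} (x/u_E)^q/q!) dx = 1/((1 + u_B ϑ)^{j+1}) − Σ_{q=0}^{k} ( (j+q)! / (j!·q!) ) · u_B^{−(j+1)} u_E^{−q} / (ϑ + 1/u_B + 1/u_E)^{j+q+1}. -/
open Real MeasureTheory

lemma aux_integrable (n : ℕ) {b : ℝ} (hb : 0 < b) :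
    IntegrableOn (fun x : ℝ => x ^ n * Real.exp (-(b * x))) (Set.Ioi 0) := by
  have := integrableOn_rpow_mul_exp_neg_mul_rpow (p := 1) (s := n) (b := b)
    (lt_of_lt_of_le neg_one_lt_zero (Nat.cast_nonneg n)) zero_lt_one hb
  refine this.congr_fun (fun x hx => ?_) measurableSet_Ioi
  simp only [Real.rpow_natCast, Real.rpow_one, neg_mul]

lemma aux_integral (n : ℕ) {b : ℝ} (hb : 0 < b) :
    ∫ x in Set.Ioi (0 : ℝ), x ^ n * Real.exp (-(b * x)) = n.factorial / b ^ (n + 1) := by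
  have h := Real.integral_rpow_mul_exp_neg_mul_Ioi (a := (n : ℝ) + 1) (r := b)
    (by positivity) hb
  rw [show (n : ℝ) + 1 - 1 = (n : ℝ) by ring] at h
  rw [Real.Gamma_nat_eq_factorial] at h
  rw [show ((n : ℝ) + 1) = ((n + 1 : ℕ) : ℝ) by push_cast; ring, Real.rpow_natCast] at h
  rw [← setIntegral_congr_fun measurableSet_Ioi
    (fun x (hx : x ∈ Set.Ioi (0:ℝ)) => by
      rw [Real.rpow_natCast] : ∀ x ∈ Set.Ioi (0:ℝ),
        x ^ (n : ℝ) * Real.exp (-(b * x)) = x ^ n * Real.exp (-(b * x)))]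
  rw [h]; field_simp
  rw [← mul_pow, one_div_mul_cancel hb.ne', one_pow]

theorem asr_cross_term_integral
    (uB uE : ℝ) (huB : 0 < uB) (huE : 0 < uE) (ϑ : ℝ) (hϑ : 0 ≤ ϑ) (j k : ℕ) :
    ∫ x in Set.Ioi (0 : ℝ),
        Real.exp (-ϑ * x) * (x ^ j * Real.exp (-x / uB) / (j.factorial * uB ^ (j + 1))) *
          (1 - Real.exp (-x / uE) * ∑ q ∈ Finset.range (k + 1),
            (x / uE) ^ q / (q.factorial : ℝ))
      = 1 / (1 + uB * ϑ) ^ (j + 1)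
        - ∑ q ∈ Finset.range (k + 1),
            (((j + q).factorial : ℝ) / (j.factorial * q.factorial)) *
              (1 / uB) ^ (j + 1) * (1 / uE) ^ q / (ϑ + 1 / uB + 1 / uE) ^ (j + q + 1) := by
  set c : ℝ := ϑ + 1 / uB with hc_def
  set d : ℝ := ϑ + 1 / uB + 1 / uE with hd_def
  have hc : 0 < c := by positivity
  have hd : 0 < d := by positivity
  have hjf : (j.factorial : ℝ) ≠ 0 := Nat.cast_ne_zero.2 j.factorial_ne_zero
  have hexp1 : ∀ x : ℝ, Real.exp (-ϑ * x) * Real.exp (-x / uB) = Real.exp (-(c * x)) := by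
    intro x; rw [← Real.exp_add]; congr 1; rw [hc_def]; ring
  have hexp2 : ∀ x : ℝ,
      Real.exp (-ϑ * x) * Real.exp (-x / uB) * Real.exp (-x / uE) = Real.exp (-(d * x)) := by
    intro x; rw [← Real.exp_add, ← Real.exp_add]; congr 1; rw [hd_def]; ring
  have key : ∀ x : ℝ,
      Real.exp (-ϑ * x) * (x ^ j * Real.exp (-x / uB) / (j.factorial * uB ^ (j + 1))) *
          (1 - Real.exp (-x / uE) * ∑ q ∈ Finset.range (k + 1),
            (x / uE) ^ q / (q.factorial : ℝ))
      = (1 / (j.factorial * uB ^ (j + 1))) * (x ^ j * Real.exp (-(c * x)))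
        - ∑ q ∈ Finset.range (k + 1),
            (1 / (j.factorial * uB ^ (j + 1) * q.factorial * uE ^ q)) *
              (x ^ (j + q) * Real.exp (-(d * x))) := by
    intro x
    rw [mul_sub, mul_one]
    congr 1
    · rw [← hexp1 x]; field_simp
    · simp only [Finset.mul_sum]
      refine Finset.sum_congr rfl fun q _ => ?_
      have hqf : (q.factorial : ℝ) ≠ 0 := Nat.cast_ne_zero.2 q.factorial_ne_zero
      rw [← hexp2 x, pow_add]
      field_simp
      ring_nf
      rw [mul_assoc _ (uE ^ q), ← mul_pow, mul_inv_cancel₀ huE.ne', one_pow, mul_one]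
  rw [setIntegral_congr_fun measurableSet_Ioi (fun x _ => key x)]
  have hF : IntegrableOn (fun x : ℝ =>
      (1 / ((j.factorial : ℝ) * uB ^ (j + 1))) * (x ^ j * Real.exp (-(c * x)))) (Set.Ioi 0) :=
    (aux_integrable j hc).const_mul _
  have hGq : ∀ q ∈ Finset.range (k + 1), IntegrableOn (fun x : ℝ =>
      (1 / ((j.factorial : ℝ) * uB ^ (j + 1) * q.factorial * uE ^ q)) *
        (x ^ (j + q) * Real.exp (-(d * x)))) (Set.Ioi 0) :=
    fun q _ => (aux_integrable (j + q) hd).const_mul _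
  have hG : IntegrableOn (fun x : ℝ => ∑ q ∈ Finset.range (k + 1),
      (1 / ((j.factorial : ℝ) * uB ^ (j + 1) * q.factorial * uE ^ q)) *
        (x ^ (j + q) * Real.exp (-(d * x)))) (Set.Ioi 0) :=
    integrable_finset_sum _ hGq
  rw [integral_sub hF hG, integral_finset_sum _ hGq, integral_const_mul, aux_integral j hc]
  have hsum : ∀ q ∈ Finset.range (k + 1),
      (∫ x in Set.Ioi (0:ℝ), (1 / ((j.factorial : ℝ) * uB ^ (j + 1) * q.factorial * uE ^ q)) *
        (x ^ (j + q) * Real.exp (-(d * x))))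
      = (((j + q).factorial : ℝ) / (j.factorial * q.factorial)) *
          (1 / uB) ^ (j + 1) * (1 / uE) ^ q / d ^ (j + q + 1) := by
    intro q _
    have hqf : (q.factorial : ℝ) ≠ 0 := Nat.cast_ne_zero.2 q.factorial_ne_zero
    rw [integral_const_mul, aux_integral (j + q) hd]
    field_simp
    ring_nf
    rw [show uB * uB ^ j * uE ^ q * uB⁻¹ * uB⁻¹ ^ j * uE⁻¹ ^ q = (uB * uB⁻¹) * (uB * uB⁻¹) ^ j * (uE * uE⁻¹) ^ q by ring,
      mul_inv_cancel₀ huB.ne', mul_inv_cancel₀ huE.ne']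
    simp
  rw [Finset.sum_congr rfl hsum]
  congr 1
  have huc : 1 + uB * ϑ = uB * c := by rw [hc_def, mul_add, mul_one_div_cancel huB.ne']; ring
  rw [huc, mul_pow]
  field_simp
end
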